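/- arXiv:0812.0038 — 3 statements merged into one kernel-verified Lean document; each statement's English description precedes it below -/
import Mathlib

section
/- Let m ≥ 1, let R_1,...,R_m ≥ 0 be rates, P_1,...,P_m ≥ 0 powers, and N > 0 noise. Suppose the total-sum inequality ∑_{i∈M} R_i < log(1 + (∑_{i∈M} P_i)/N) holds, where M = {1,...,m}. Then there exists a nonempty subset D ⊆ M such that for every nonempty S ⊆ D, ∑_{i∈S} R_i < log(1 + (∑_{i∈S} P_i)/(∑_{i∈M\D} P_i + N)). (Equivalently: some nonempty subset of sources can be jointly decoded while treating the complement as noise.) -/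
open Finset

/-- Lemma 1: if the total-sum multiple-access inequality holds, then some nonempty
subset `D` of the sources can be jointly decoded treating the complement as noise. -/
theorem exists_decodable_subset (m : ℕ) (hm : 1 ≤ m)
    (R P : Fin m → ℝ) (hR : ∀ i, 0 ≤ R i) (hP : ∀ i, 0 ≤ P i)
    (N c : ℝ) (hN : 0 < N) (hc : 1 < c)
    (htot : ∑ i, R i < Real.logb c (1 + (∑ i, P i) / N)) :
    ∃ D : Finset (Fin m), D.Nonempty ∧
      ∀ S ⊆ D, S.Nonempty →
        ∑ i ∈ S, R i <
          Real.logb c (1 + (∑ i ∈ S, P i) / ((∑ i ∈ Finset.univ \ D, P i) + N)) := by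
  classical
  have hQuniv : ∑ i ∈ (univ : Finset (Fin m)), R i <
      Real.logb c (1 + (∑ i ∈ (univ : Finset (Fin m)), P i) /
        ((∑ i ∈ univ \ (univ : Finset (Fin m)), P i) + N)) := by
    simpa using htot
  suffices H : ∀ n (D : Finset (Fin m)), D.card ≤ n → D.Nonempty →
      (∑ i ∈ D, R i <
        Real.logb c (1 + (∑ i ∈ D, P i) / ((∑ i ∈ univ \ D, P i) + N))) →
      ∃ D' : Finset (Fin m), D'.Nonempty ∧ ∀ S ⊆ D', S.Nonempty →
        ∑ i ∈ S, R i <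
          Real.logb c (1 + (∑ i ∈ S, P i) / ((∑ i ∈ univ \ D', P i) + N)) by
    have hne : (univ : Finset (Fin m)).Nonempty :=
      univ_nonempty_iff.mpr (Fin.pos_iff_nonempty.mp hm)
    exact H (univ : Finset (Fin m)).card univ le_rfl hne hQuniv
  intro n
  induction n with
  | zero =>
    intro D hcard hne _
    have := hne.card_pos
    omega
  | succ n ih =>
    intro D hcard hne hQD
    by_cases hgood : ∀ S ⊆ D, S.Nonempty →
        ∑ i ∈ S, R i <
          Real.logb c (1 + (∑ i ∈ S, P i) / ((∑ i ∈ univ \ D, P i) + N))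
    · exact ⟨D, hne, hgood⟩
    · push_neg at hgood
      obtain ⟨S, hSD, hSne, hS⟩ := hgood
      have hSneq : S ≠ D := by
        rintro rfl
        exact absurd hQD (not_lt.mpr hS)
      have hDSne : (D \ S).Nonempty := by
        obtain ⟨x, hxD, hxS⟩ := Finset.exists_of_ssubset (hSD.ssubset_of_ne hSneq)
        exact ⟨x, Finset.mem_sdiff.mpr ⟨hxD, hxS⟩⟩
      set N0 : ℝ := (∑ i ∈ univ \ D, P i) + N with hN0def
      set a : ℝ := ∑ i ∈ S, P i with ha
      set b : ℝ := ∑ i ∈ D \ S, P i with hb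
      have hN0 : 0 < N0 := by
        have : 0 ≤ ∑ i ∈ univ \ D, P i := Finset.sum_nonneg fun i _ => hP i
        linarith
      have ha0 : 0 ≤ a := Finset.sum_nonneg fun i _ => hP i
      have hb0 : 0 ≤ b := Finset.sum_nonneg fun i _ => hP i
      have hsumP : b + a = ∑ i ∈ D, P i := Finset.sum_sdiff hSD
      have hsumR : ∑ i ∈ D \ S, R i + ∑ i ∈ S, R i = ∑ i ∈ D, R i :=
        Finset.sum_sdiff hSD
      -- complement of D \ S
      have hcompl : (univ \ (D \ S) : Finset (Fin m)) = (univ \ D) ∪ S := by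
        ext i
        simp only [Finset.mem_sdiff, Finset.mem_union, Finset.mem_univ, true_and]
        constructor
        · intro h
          by_cases hiD : i ∈ D
          · right; by_contra hiS; exact h ⟨hiD, hiS⟩
          · left; exact hiD
        · rintro (h | h) ⟨hiD, hiS⟩
          · exact h hiD
          · exact hiS (h)
      have hdisj : Disjoint (univ \ D) S :=
        Finset.disjoint_left.mpr fun i hi his =>
          (Finset.mem_sdiff.mp hi).2 (hSD his)
      have hcomplsum : ∑ i ∈ univ \ (D \ S), P i = (∑ i ∈ univ \ D, P i) + a := by
        rw [hcompl, Finset.sum_union hdisj]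
      -- key log identity
      have h1 : (0:ℝ) < 1 + (a + b) / N0 := by positivity
      have h2 : (0:ℝ) < 1 + a / N0 := by positivity
      have hkey : Real.logb c (1 + (a + b) / N0) - Real.logb c (1 + a / N0)
          = Real.logb c (1 + b / (N0 + a)) := by
        rw [show (1 + b / (N0 + a)) = (1 + (a + b) / N0) / (1 + a / N0) by
          field_simp; ring]
        exact (Real.logb_div (ne_of_gt h1) (ne_of_gt h2)).symm
      have hQD' : ∑ i ∈ D \ S, R i <
          Real.logb c (1 + (∑ i ∈ D \ S, P i) / ((∑ i ∈ univ \ (D \ S), P i) + N)) := by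
        have hsum : ∑ i ∈ D \ S, R i = ∑ i ∈ D, R i - ∑ i ∈ S, R i := by
          linarith
        have hQD2 : ∑ i ∈ D, R i < Real.logb c (1 + (a + b) / N0) := by
          have : (∑ i ∈ D, P i) = a + b := by linarith
          rw [← this]
          exact hQD
        have hnoise : (∑ i ∈ univ \ (D \ S), P i) + N = N0 + a := by
          rw [hcomplsum]; ring
        rw [hsum, hnoise, ← hb]
        linarith [hkey, hS, hQD2]
      have hcardD' : (D \ S).card ≤ n := by
        have h1 : (D \ S).card < D.card :=
          Finset.card_lt_card (Finset.sdiff_ssubset hSD hSne)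
        omega
      exact ih (D \ S) hcardD' hDSne hQD'
end

section
/- Two-block contradiction step: let M be a finite set partitioned as M = M1 ∪ M2 (disjoint), with rates R_i ≥ 0, powers P_i ≥ 0, N > 0. Suppose ∑_{i∈M} R_i < log(1 + (∑_{i∈M1} P_i)/N) + log(1 + (∑_{i∈M2} P_i)/(∑_{i∈M1} P_i + N)). Suppose for some A ⊆ M with associated sets A1 ⊆ M1, A2 ⊆ M2 satisfying A ⊆ A1 ∪ A2 we have ∑_{i∈A} R_i ≥ log(1 + (∑_{i∈A1} P_i)/N) + log(1 + (∑_{i∈A2} P_i)/(∑_{i∈M1} P_i + N)). Then, with A1^c = M1\A1 and A2^c = M2\A2, ∑_{i∈A1^c ∪ A2^c} R_i < log(1 + (∑_{i∈A1^c} P_i)/(∑_{i∈A1} P_i + N)) + log(1 + (∑_{i∈A2^c} P_i)/(∑_{i∈A2} P_i + ∑_{i∈M1} P_i + N)). -/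
open Finset

lemma logb_one_add_div (c x y : ℝ) (hx : 0 ≤ x) (hy : 0 < y) :
    Real.logb c (1 + x / y) = Real.logb c (x + y) - Real.logb c y := by
  have h1 : 1 + x / y = (x + y) / y := by field_simp; ring
  rw [h1, Real.logb_div (by positivity) (by positivity)]

/-- Two-block contradiction step: from the two-block total-sum inequality and a
violated two-block subset inequality, derive the two-block inequality for the
complementary sets with adjusted noises. -/
theorem two_block_peeling_step {ι : Type*} [DecidableEq ι]
    (M M1 M2 : Finset ι) (hdisj : Disjoint M1 M2) (hunion : M1 ∪ M2 = M)
    (R P : ι → ℝ) (hR : ∀ i ∈ M, 0 ≤ R i) (hP : ∀ i ∈ M, 0 ≤ P i)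
    (N c : ℝ) (hN : 0 < N) (hc : 1 < c)
    (A A1 A2 : Finset ι) (hAM : A ⊆ M) (hA1 : A1 ⊆ M1) (hA2 : A2 ⊆ M2)
    (hAsub : A ⊆ A1 ∪ A2)
    (htot : ∑ i ∈ M, R i <
      Real.logb c (1 + (∑ i ∈ M1, P i) / N) +
        Real.logb c (1 + (∑ i ∈ M2, P i) / ((∑ i ∈ M1, P i) + N)))
    (hviol : ∑ i ∈ A, R i ≥
      Real.logb c (1 + (∑ i ∈ A1, P i) / N) +
        Real.logb c (1 + (∑ i ∈ A2, P i) / ((∑ i ∈ M1, P i) + N))) :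
    ∑ i ∈ (M1 \ A1) ∪ (M2 \ A2), R i <
      Real.logb c (1 + (∑ i ∈ M1 \ A1, P i) / ((∑ i ∈ A1, P i) + N)) +
        Real.logb c (1 + (∑ i ∈ M2 \ A2, P i) /
          ((∑ i ∈ A2, P i) + (∑ i ∈ M1, P i) + N)) := by
  have hM1M : M1 ⊆ M := hunion ▸ subset_union_left
  have hM2M : M2 ⊆ M := hunion ▸ subset_union_right
  -- nonnegativity of power sums
  have ha1 : 0 ≤ ∑ i ∈ A1, P i :=
    Finset.sum_nonneg fun i hi => hP i (hM1M (hA1 hi))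
  have ha2 : 0 ≤ ∑ i ∈ A2, P i :=
    Finset.sum_nonneg fun i hi => hP i (hM2M (hA2 hi))
  have hc1 : 0 ≤ ∑ i ∈ M1 \ A1, P i :=
    Finset.sum_nonneg fun i hi => hP i (hM1M (Finset.mem_sdiff.mp hi).1)
  have hc2 : 0 ≤ ∑ i ∈ M2 \ A2, P i :=
    Finset.sum_nonneg fun i hi => hP i (hM2M (Finset.mem_sdiff.mp hi).1)
  have hs1 : ∑ i ∈ M1 \ A1, P i + ∑ i ∈ A1, P i = ∑ i ∈ M1, P i :=
    Finset.sum_sdiff hA1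
  have hs2 : ∑ i ∈ M2 \ A2, P i + ∑ i ∈ A2, P i = ∑ i ∈ M2, P i :=
    Finset.sum_sdiff hA2
  -- the complement set is contained in M \ A
  have hsub : (M1 \ A1) ∪ (M2 \ A2) ⊆ M \ A := by
    intro i hi
    rw [Finset.mem_sdiff]
    rcases Finset.mem_union.mp hi with h | h
    · obtain ⟨h1, h2⟩ := Finset.mem_sdiff.mp h
      refine ⟨hM1M h1, fun hA => ?_⟩
      rcases Finset.mem_union.mp (hAsub hA) with h' | h'
      · exact h2 h'
      · exact (Finset.disjoint_left.mp hdisj h1) (hA2 h')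
    · obtain ⟨h1, h2⟩ := Finset.mem_sdiff.mp h
      refine ⟨hM2M h1, fun hA => ?_⟩
      rcases Finset.mem_union.mp (hAsub hA) with h' | h'
      · exact (Finset.disjoint_right.mp hdisj h1) (hA1 h')
      · exact h2 h'
  have hle : ∑ i ∈ (M1 \ A1) ∪ (M2 \ A2), R i ≤ ∑ i ∈ M \ A, R i :=
    Finset.sum_le_sum_of_subset_of_nonneg hsub
      (fun i hi _ => hR i (Finset.mem_sdiff.mp hi).1)
  have hMA : ∑ i ∈ M \ A, R i + ∑ i ∈ A, R i = ∑ i ∈ M, R i :=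
    Finset.sum_sdiff hAM
  have hm1 : 0 ≤ ∑ i ∈ M1, P i := by linarith
  have hm2 : 0 ≤ ∑ i ∈ M2, P i := by linarith
  -- rewrite all logb terms
  rw [logb_one_add_div c _ _ hc1 (by linarith),
      logb_one_add_div c _ _ hc2 (by linarith)]
  rw [logb_one_add_div c _ _ hm1 hN,
      logb_one_add_div c _ _ hm2 (by linarith)] at htot
  rw [logb_one_add_div c _ _ ha1 hN,
      logb_one_add_div c _ _ ha2 (by linarith)] at hviol
  have e3 : (∑ i ∈ A2, P i) + (∑ i ∈ M1, P i) + N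
      = ∑ i ∈ A2, P i + ((∑ i ∈ M1, P i) + N) := by ring
  rw [e3]
  have e1 : ∑ i ∈ M1 \ A1, P i + ((∑ i ∈ A1, P i) + N) = ∑ i ∈ M1, P i + N := by
    linarith
  have e2 : ∑ i ∈ M2 \ A2, P i + ((∑ i ∈ A2, P i) + ((∑ i ∈ M1, P i) + N))
      = ∑ i ∈ M2, P i + ((∑ i ∈ M1, P i) + N) := by linarith
  rw [e1, e2]
  linarith
end

section
/- Let P_1 ≥ ... ≥ P_{n-1} ≥ 0, N > 0, and let i, ℓ be integers with 2 ≤ i ≤ n-1 and 1 ≤ ℓ ≤ i-2. Suppose R ≥ 0 satisfies (n-1)·R < log(1 + (∑_{j=1}^{n-1} P_j)/N). Then at least one of the following holds: (a) (ℓ + n - i)·R < log(1 + (∑_{j=i-ℓ}^{i-1} P_j + ∑_{j=1}^{n-i} P_j)/N), or (b) (n - i)·R < log(1 + (∑_{j=1}^{n-i} P_j)/(∑_{j=i-ℓ}^{i-1} P_j + N)). -/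
open Finset

/-- Concavity of `logb` through the origin: for `0 ≤ t ≤ 1`,
`t * logb c (1+x) ≤ logb c (1 + t*x)`. -/
lemma aux_logb_concave {c : ℝ} (hc : 1 < c) {t x : ℝ} (ht0 : 0 ≤ t) (ht1 : t ≤ 1)
    (hx : 0 ≤ x) : t * Real.logb c (1 + x) ≤ Real.logb c (1 + t * x) := by
  have hlog : t * Real.log (1 + x) ≤ Real.log (1 + t * x) := by
    have h1x : (1 : ℝ) + x ∈ Set.Ioi (0 : ℝ) := by simp; linarith
    have h1 : (1 : ℝ) ∈ Set.Ioi (0 : ℝ) := by norm_num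
    have key := strictConcaveOn_log_Ioi.concaveOn.2 h1x h1 ht0
      (by linarith : (0:ℝ) ≤ 1 - t) (by ring)
    have e : t • ((1:ℝ) + x) + (1 - t) • (1:ℝ) = 1 + t * x := by
      simp [smul_eq_mul]; ring
    rw [e] at key
    simpa [smul_eq_mul, Real.log_one] using key
  unfold Real.logb
  rw [mul_div_assoc']
  exact div_le_div_of_nonneg_right hlog (Real.log_pos hc).le

/-- Splitting identity for `logb`. -/
lemma aux_logb_split {c x y N : ℝ} (hN : 0 < N) (hx : 0 ≤ x) (hy : 0 ≤ y) :
    Real.logb c (1 + (x + y) / N)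
      = Real.logb c (1 + x / N) + Real.logb c (1 + y / (x + N)) := by
  have hxN : (0:ℝ) < x + N := by linarith
  have e : 1 + (x + y) / N = (1 + x / N) * (1 + y / (x + N)) := by
    field_simp; ring
  rw [e, Real.logb_mul]
  · positivity
  · positivity

set_option maxHeartbeats 2000000 in
/-- Verification of condition i) for the regular one-dimensional network:
the symmetric rate bound implies (21') or (22'). -/
theorem condition_i_holds (n i ℓ : ℕ) (hn : 2 ≤ n)
    (hi1 : 2 ≤ i) (hi2 : i ≤ n - 1) (hℓ1 : 1 ≤ ℓ) (hℓ2 : ℓ ≤ i - 2)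
    (P : ℕ → ℝ) (hPnonneg : ∀ j, 0 ≤ P j)
    (hmono : ∀ j k, 1 ≤ j → j ≤ k → k ≤ n - 1 → P k ≤ P j)
    (R N c : ℝ) (hR : 0 ≤ R) (hN : 0 < N) (hc : 1 < c)
    (h : ((n : ℝ) - 1) * R < Real.logb c (1 + (∑ j ∈ Icc 1 (n - 1), P j) / N)) :
    ((ℓ + n - i : ℕ) : ℝ) * R <
        Real.logb c (1 + ((∑ j ∈ Icc (i - ℓ) (i - 1), P j)
          + ∑ j ∈ Icc 1 (n - i), P j) / N) ∨
      ((n - i : ℕ) : ℝ) * R <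
        Real.logb c (1 + (∑ j ∈ Icc 1 (n - i), P j) /
          ((∑ j ∈ Icc (i - ℓ) (i - 1), P j) + N)) := by
  have hin : i + 1 ≤ n := by omega
  have hℓi : ℓ + 2 ≤ i := by omega
  set A := ∑ j ∈ Icc (i - ℓ) (i - 1), P j with hA
  set B := ∑ j ∈ Icc 1 (n - i), P j with hB
  set S := ∑ j ∈ Icc 1 (n - 1), P j with hS
  have hA0 : 0 ≤ A := sum_nonneg fun j _ => hPnonneg j
  have hB0 : 0 ≤ B := sum_nonneg fun j _ => hPnonneg j
  have hS0 : 0 ≤ S := sum_nonneg fun j _ => hPnonneg j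
  have hn1 : (0:ℝ) < (n:ℝ) - 1 := by
    have : (2:ℝ) ≤ (n:ℝ) := by exact_mod_cast hn
    linarith
  by_cases hcase : 2 * i ≤ n + ℓ + 1
  · -- overlap case: prove (21')
    left
    set Q1 := ∑ j ∈ Icc 1 (ℓ + n - i), P j with hQ1
    set Q2 := ∑ j ∈ Icc (ℓ + n - i + 1) (n - 1), P j with hQ2
    -- Q1 ≤ A + B
    have hsum1 : (∑ j ∈ Icc 1 (n - i), P j)
        + (∑ j ∈ Icc (n - i + 1) (ℓ + n - i), P j) = Q1 := by
      rw [hQ1]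
      have e1 : Icc 1 (n - i) = Ioc 0 (n - i) := by ext x; simp only [Finset.mem_Icc, Finset.mem_Ioc, Finset.mem_Ico]; omega
      have e2 : Icc (n - i + 1) (ℓ + n - i) = Ioc (n - i) (ℓ + n - i) := by
        ext x; simp only [Finset.mem_Icc, Finset.mem_Ioc, Finset.mem_Ico]; omega
      have e3 : Icc 1 (ℓ + n - i) = Ioc 0 (ℓ + n - i) := by ext x; simp only [Finset.mem_Icc, Finset.mem_Ioc, Finset.mem_Ico]; omega
      rw [e1, e2, e3]
      exact sum_Ioc_consecutive P (by omega) (by omega)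
    have hterm : ∑ j ∈ Icc (n - i + 1) (ℓ + n - i), P j ≤ A := by
      rw [hA]
      have e1 : Icc (n - i + 1) (ℓ + n - i) = Ico (n - i + 1) (n - i + ℓ + 1) := by
        ext x; simp only [Finset.mem_Icc, Finset.mem_Ioc, Finset.mem_Ico]; omega
      have e2 : Icc (i - ℓ) (i - 1) = Ico (i - ℓ) i := by ext x; simp only [Finset.mem_Icc, Finset.mem_Ioc, Finset.mem_Ico]; omega
      rw [e1, e2, sum_Ico_eq_sum_range, sum_Ico_eq_sum_range]
      rw [show n - i + ℓ + 1 - (n - i + 1) = ℓ from by omega,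
        show i - (i - ℓ) = ℓ from by omega]
      apply Finset.sum_le_sum
      intro r hr
      simp only [mem_range] at hr
      exact hmono (i - ℓ + r) (n - i + 1 + r) (by omega) (by omega) (by omega)
    have hQ1AB : Q1 ≤ A + B := by rw [← hsum1]; linarith [hterm]
    -- averaging
    have hp0 : 0 ≤ P (ℓ + n - i) := hPnonneg _
    have hQ1m : ((ℓ + n - i : ℕ):ℝ) * P (ℓ + n - i) ≤ Q1 := by
      have := Finset.card_nsmul_le_sum (Icc 1 (ℓ + n - i)) P (P (ℓ + n - i))
        (fun j hj => by
          simp only [mem_Icc] at hj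
          exact hmono j (ℓ + n - i) hj.1 hj.2 (by omega))
      simpa [Nat.card_Icc, nsmul_eq_mul, show ℓ + n - i + 1 - 1 = ℓ + n - i from by omega]
        using this
    have hQ2m : Q2 ≤ ((n - 1 - (ℓ + n - i) : ℕ):ℝ) * P (ℓ + n - i) := by
      have := Finset.sum_le_card_nsmul (Icc (ℓ + n - i + 1) (n - 1)) P (P (ℓ + n - i))
        (fun j hj => by
          simp only [mem_Icc] at hj
          exact hmono (ℓ + n - i) j (by omega) (by omega) hj.2)
      simpa [Nat.card_Icc, nsmul_eq_mul,
        show n - 1 + 1 - (ℓ + n - i + 1) = n - 1 - (ℓ + n - i) from by omega] using this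
    have hS12 : S = Q1 + Q2 := by
      rw [hS, hQ1, hQ2]
      have e1 : Icc 1 (ℓ + n - i) = Ioc 0 (ℓ + n - i) := by ext x; simp only [Finset.mem_Icc, Finset.mem_Ioc, Finset.mem_Ico]; omega
      have e2 : Icc (ℓ + n - i + 1) (n - 1) = Ioc (ℓ + n - i) (n - 1) := by
        ext x; simp only [Finset.mem_Icc, Finset.mem_Ioc, Finset.mem_Ico]; omega
      have e3 : Icc 1 (n - 1) = Ioc 0 (n - 1) := by ext x; simp only [Finset.mem_Icc, Finset.mem_Ioc, Finset.mem_Ico]; omega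
      rw [e1, e2, e3]
      exact (sum_Ioc_consecutive P (by omega) (by omega)).symm
    have hQ10 : 0 ≤ Q1 := sum_nonneg fun j _ => hPnonneg j
    have hcadd : ((ℓ + n - i : ℕ):ℝ) + ((n - 1 - (ℓ + n - i) : ℕ):ℝ) = (n:ℝ) - 1 := by
      rw [← Nat.cast_add, show ℓ + n - i + (n - 1 - (ℓ + n - i)) = n - 1 from by omega,
        Nat.cast_sub (by omega)]
      simp
    have ha0 : (0:ℝ) ≤ ((ℓ + n - i : ℕ):ℝ) := Nat.cast_nonneg _
    have hb0 : (0:ℝ) ≤ ((n - 1 - (ℓ + n - i) : ℕ):ℝ) := Nat.cast_nonneg _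
    have hkey : ((ℓ + n - i : ℕ):ℝ) * S ≤ ((n:ℝ) - 1) * Q1 := by
      have h1 := mul_le_mul_of_nonneg_left hQ2m ha0
      have h2 := mul_le_mul_of_nonneg_left hQ1m hb0
      rw [hS12]
      nlinarith [h1, h2]
    have ha1 : (1:ℝ) ≤ ((ℓ + n - i : ℕ):ℝ) := by
      exact_mod_cast Nat.one_le_cast.mpr (by omega : 1 ≤ ℓ + n - i)
    have haln : ((ℓ + n - i : ℕ):ℝ) ≤ (n:ℝ) - 1 := by
      rw [show (n:ℝ) - 1 = ((n - 1 : ℕ):ℝ) from by rw [Nat.cast_sub (by omega)]; simp]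
      exact_mod_cast (by omega : ℓ + n - i ≤ n - 1)
    set t := ((ℓ + n - i : ℕ):ℝ) / ((n:ℝ) - 1) with ht
    have htpos : 0 < t := div_pos (by linarith) hn1
    have ht1 : t ≤ 1 := by rw [ht, div_le_one hn1]; exact haln
    have htS : t * S ≤ A + B := by
      rw [ht, div_mul_eq_mul_div, div_le_iff₀ hn1]
      calc ((ℓ + n - i : ℕ):ℝ) * S ≤ ((n:ℝ) - 1) * Q1 := hkey
        _ ≤ (A + B) * ((n:ℝ) - 1) := by nlinarith [hQ1AB]
    calc ((ℓ + n - i : ℕ):ℝ) * R = t * (((n:ℝ) - 1) * R) := by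
          rw [ht]; field_simp
      _ < t * Real.logb c (1 + S / N) := mul_lt_mul_of_pos_left h htpos
      _ ≤ Real.logb c (1 + t * (S / N)) :=
          aux_logb_concave hc htpos.le ht1 (div_nonneg hS0 hN.le)
      _ ≤ Real.logb c (1 + (A + B) / N) := by
          have hpos : (0:ℝ) < 1 + t * (S / N) := by
            have : 0 ≤ t * (S / N) := mul_nonneg htpos.le (div_nonneg hS0 hN.le)
            linarith
          apply Real.logb_le_logb_of_le hc hpos
          have : t * (S / N) ≤ (A + B) / N := by
            rw [mul_div_assoc']
            exact div_le_div_of_nonneg_right htS hN.le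
          linarith
  · -- disjoint case
    push_neg at hcase
    set D1 := ∑ j ∈ Icc (n - i + 1) (i - ℓ - 1), P j with hD1
    set D2 := ∑ j ∈ Icc i (n - 1), P j with hD2
    have hD10 : 0 ≤ D1 := sum_nonneg fun j _ => hPnonneg j
    have hD20 : 0 ≤ D2 := sum_nonneg fun j _ => hPnonneg j
    have hsplit : S = (A + B) + (D1 + D2) := by
      have eB : B = ∑ j ∈ Ioc 0 (n - i), P j := by
        rw [hB, show Icc 1 (n - i) = Ioc 0 (n - i) from by
          ext x; simp only [Finset.mem_Icc, Finset.mem_Ioc]; omega]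
      have eS : S = ∑ j ∈ Ioc 0 (n - 1), P j := by
        rw [hS, show Icc 1 (n - 1) = Ioc 0 (n - 1) from by
          ext x; simp only [Finset.mem_Icc, Finset.mem_Ioc]; omega]
      have eA : A = ∑ j ∈ Ioc (i - ℓ - 1) (i - 1), P j := by
        rw [hA, show Icc (i - ℓ) (i - 1) = Ioc (i - ℓ - 1) (i - 1) from by
          ext x; simp only [Finset.mem_Icc, Finset.mem_Ioc]; omega]
      have eD1 : D1 = ∑ j ∈ Ioc (n - i) (i - ℓ - 1), P j := by
        rw [hD1, show Icc (n - i + 1) (i - ℓ - 1) = Ioc (n - i) (i - ℓ - 1) from by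
          ext x; simp only [Finset.mem_Icc, Finset.mem_Ioc]; omega]
      have eD2 : D2 = ∑ j ∈ Ioc (i - 1) (n - 1), P j := by
        rw [hD2, show Icc i (n - 1) = Ioc (i - 1) (n - 1) from by
          ext x; simp only [Finset.mem_Icc, Finset.mem_Ioc]; omega]
      have c1 := sum_Ioc_consecutive P (show 0 ≤ n - i from by omega)
        (show n - i ≤ i - ℓ - 1 from by omega)
      have c2 := sum_Ioc_consecutive P (show 0 ≤ i - ℓ - 1 from by omega)
        (show i - ℓ - 1 ≤ i - 1 from by omega)
      have c3 := sum_Ioc_consecutive P (show 0 ≤ i - 1 from by omega)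
        (show i - 1 ≤ n - 1 from by omega)
      rw [eS, eB, eA, eD1, eD2]
      linarith [c1, c2, c3]
    have hidentity : Real.logb c (1 + S / N)
        = Real.logb c (1 + (A + B) / N)
          + Real.logb c (1 + (D1 + D2) / ((A + B) + N)) := by
      rw [show S = (A + B) + (D1 + D2) from hsplit]
      exact aux_logb_split hN (by linarith) (by linarith)
    have hcastd : ((ℓ + n - i : ℕ):ℝ) + ((i - ℓ - 1 : ℕ):ℝ) = (n:ℝ) - 1 := by
      rw [← Nat.cast_add, show ℓ + n - i + (i - ℓ - 1) = n - 1 from by omega,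
        Nat.cast_sub (by omega)]
      simp
    by_cases hsub : Real.logb c (1 + (D1 + D2) / ((A + B) + N)) ≤ ((i - ℓ - 1 : ℕ):ℝ) * R
    · left
      rw [hidentity] at h
      have hmul : (((ℓ + n - i : ℕ):ℝ) + ((i - ℓ - 1 : ℕ):ℝ)) * R = ((n:ℝ) - 1) * R := by
        rw [hcastd]
      linarith [h, hsub, hmul]
    · right
      push_neg at hsub
      have hp0 : 0 ≤ P (n - i + 1) := hPnonneg _
      have hDle : D1 + D2 ≤ ((i - ℓ - 1 : ℕ):ℝ) * P (n - i + 1) := by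
        have h1 : D1 ≤ ((i - ℓ - 1 - (n - i) : ℕ):ℝ) * P (n - i + 1) := by
          have := Finset.sum_le_card_nsmul (Icc (n - i + 1) (i - ℓ - 1)) P (P (n - i + 1))
            (fun j hj => by
              simp only [mem_Icc] at hj
              exact hmono (n - i + 1) j (by omega) hj.1 (by omega))
          simpa [Nat.card_Icc, nsmul_eq_mul,
            show i - ℓ - 1 + 1 - (n - i + 1) = i - ℓ - 1 - (n - i) from by omega] using this
        have h2 : D2 ≤ ((n - i : ℕ):ℝ) * P (n - i + 1) := by
          have := Finset.sum_le_card_nsmul (Icc i (n - 1)) P (P (n - i + 1))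
            (fun j hj => by
              simp only [mem_Icc] at hj
              exact hmono (n - i + 1) j (by omega) (by omega) hj.2)
          simpa [Nat.card_Icc, nsmul_eq_mul,
            show n - 1 + 1 - i = n - i from by omega] using this
        have hcadd : ((i - ℓ - 1 - (n - i) : ℕ):ℝ) + ((n - i : ℕ):ℝ)
            = ((i - ℓ - 1 : ℕ):ℝ) := by
          rw [← Nat.cast_add]; congr 1; omega
        nlinarith [h1, h2, hcadd]
      have hBge : ((n - i : ℕ):ℝ) * P (n - i + 1) ≤ B := by
        have := Finset.card_nsmul_le_sum (Icc 1 (n - i)) P (P (n - i + 1))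
          (fun j hj => by
            simp only [mem_Icc] at hj
            exact hmono j (n - i + 1) hj.1 (by omega) (by omega))
        simpa [Nat.card_Icc, nsmul_eq_mul,
          show n - i + 1 - 1 = n - i from by omega] using this
      have hd1 : (1:ℝ) ≤ ((i - ℓ - 1 : ℕ):ℝ) := by
        exact_mod_cast Nat.one_le_cast.mpr (by omega : 1 ≤ i - ℓ - 1)
      have hdpos : (0:ℝ) < ((i - ℓ - 1 : ℕ):ℝ) := by linarith
      have hnid : ((n - i : ℕ):ℝ) ≤ ((i - ℓ - 1 : ℕ):ℝ) := by
        exact_mod_cast (by omega : n - i ≤ i - ℓ - 1)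
      have hni0 : (0:ℝ) ≤ ((n - i : ℕ):ℝ) := Nat.cast_nonneg _
      set t := ((n - i : ℕ):ℝ) / ((i - ℓ - 1 : ℕ):ℝ) with ht
      have htpos : 0 < t := by
        apply div_pos _ hdpos
        exact_mod_cast Nat.cast_pos.mpr (by omega : 0 < n - i)
      have ht1 : t ≤ 1 := by rw [ht, div_le_one hdpos]; exact hnid
      have hABN : (0:ℝ) < (A + B) + N := by linarith
      have hAN : (0:ℝ) < A + N := by linarith
      have hx0 : (0:ℝ) ≤ (D1 + D2) / ((A + B) + N) := div_nonneg (by linarith) hABN.le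
      have htD : t * (D1 + D2) ≤ B := by
        have h1 : t * (D1 + D2) ≤ t * (((i - ℓ - 1 : ℕ):ℝ) * P (n - i + 1)) :=
          mul_le_mul_of_nonneg_left hDle htpos.le
        have h2 : t * (((i - ℓ - 1 : ℕ):ℝ) * P (n - i + 1))
            = ((n - i : ℕ):ℝ) * P (n - i + 1) := by
          rw [ht]; field_simp
        linarith [h1, hBge]
      calc ((n - i : ℕ):ℝ) * R = t * (((i - ℓ - 1 : ℕ):ℝ) * R) := by
            rw [ht]; field_simp
        _ < t * Real.logb c (1 + (D1 + D2) / ((A + B) + N)) :=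
            mul_lt_mul_of_pos_left hsub htpos
        _ ≤ Real.logb c (1 + t * ((D1 + D2) / ((A + B) + N))) :=
            aux_logb_concave hc htpos.le ht1 hx0
        _ ≤ Real.logb c (1 + B / (A + N)) := by
            have hpos : (0:ℝ) < 1 + t * ((D1 + D2) / ((A + B) + N)) := by
              have : 0 ≤ t * ((D1 + D2) / ((A + B) + N)) := mul_nonneg htpos.le hx0
              linarith
            apply Real.logb_le_logb_of_le hc hpos
            have : t * ((D1 + D2) / ((A + B) + N)) ≤ B / (A + N) := by
              rw [mul_div_assoc']
              exact div_le_div₀ hB0 htD hAN (by linarith)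
            linarith
end
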